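/- For n ∈ ℕ, there is a unique rooted binary tree with n leaves of minimal Sackin index if and only if n ∈ {2^m − 1, 2^m, 2^m + 1} for some m ∈ ℕ. -/
import Mathlib


/-- Rooted binary trees: a single node (leaf) or a root with two subtrees. -/
inductive BTree : Type
  | leaf : BTree
  | node : BTree → BTree → BTree

namespace BTree

/-- Number of leaves of a rooted binary tree. -/
def leaves : BTree → ℕ
  | leaf => 1
  | node l r => l.leaves + r.leaves

/-- Sum of depths of all leaves, where the root of the tree is at depth `d`. -/
def sackinAux : BTree → ℕ → ℕ
  | leaf, d => d
  | node l r, d => sackinAux l (d + 1) + sackinAux r (d + 1)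

/-- Sackin index: the sum of the depths of all leaves. -/
def sackin (t : BTree) : ℕ := sackinAux t 0

/-- Sum, over all internal nodes `u`, of the number of leaves below `u`. -/
def internalLeafSum : BTree → ℕ
  | leaf => 0
  | node l r => (l.leaves + r.leaves) + internalLeafSum l + internalLeafSum r

/-- Sum, over all nodes `v`, of the number of leaves below `v`. -/
def allNodesLeafSum : BTree → ℕ
  | leaf => 1
  | node l r => (l.leaves + r.leaves) + allNodesLeafSum l + allNodesLeafSum r

/-- Sum, over all non-root nodes `v`, of the number of leaves below `v`. -/
def nonRootLeafSum : BTree → ℕ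
  | leaf => 0
  | node l r => allNodesLeafSum l + allNodesLeafSum r

/-- Height: maximal number of edges on a root-to-leaf path. -/
def height : BTree → ℕ
  | leaf => 0
  | node l r => max l.height r.height + 1

/-- Subtree at a given path from the root (`false` = left child, `true` = right child). -/
def subtreeAt : BTree → List Bool → Option BTree
  | t, [] => some t
  | leaf, _ :: _ => none
  | node l _, false :: p => subtreeAt l p
  | node _ r, true :: p => subtreeAt r p

/-- Number of cherries (pairs of sibling leaves) whose two leaves are at depth `d`. -/
def cherriesAt : BTree → ℕ → ℕ
  | leaf, _ => 0
  | node leaf leaf, d => if d = 1 then 1 else 0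
  | node _ _, 0 => 0
  | node l r, d + 1 => cherriesAt l d + cherriesAt r d

/-- `DeleteCherry t d t'` : `t'` is obtained from `t` by deleting a cherry `[u,v]`
(both leaves at depth `d`) together with the two pendant edges, turning the
parent `w` into a leaf. -/
inductive DeleteCherry : BTree → ℕ → BTree → Prop
  | base : DeleteCherry (BTree.node BTree.leaf BTree.leaf) 1 BTree.leaf
  | left {l l' r : BTree} {d : ℕ} :
      DeleteCherry l d l' → DeleteCherry (BTree.node l r) (d + 1) (BTree.node l' r)
  | right {l r r' : BTree} {d : ℕ} :
      DeleteCherry r d r' → DeleteCherry (BTree.node l r) (d + 1) (BTree.node l r')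

/-- Caterpillar tree with `n` leaves (for `n ≥ 1`): the unique rooted binary tree
with exactly one cherry. -/
def caterpillar : ℕ → BTree
  | 0 => BTree.leaf
  | 1 => BTree.leaf
  | n + 2 => BTree.node (caterpillar (n + 1)) BTree.leaf

/-- Fully balanced tree of height `k`, with `2^k` leaves all at depth `k`. -/
def balanced : ℕ → BTree
  | 0 => BTree.leaf
  | k + 1 => BTree.node (balanced k) (balanced k)

/-- Isomorphism of rooted binary trees (children are unordered). -/
inductive Iso : BTree → BTree → Prop
  | leaf : Iso BTree.leaf BTree.leaf
  | node {a b c d : BTree} : Iso a c → Iso b d → Iso (BTree.node a b) (BTree.node c d)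
  | swap {a b c d : BTree} : Iso a d → Iso b c → Iso (BTree.node a b) (BTree.node c d)

end BTree

open BTree


namespace BTree

/-! ### Basic lemmas -/

theorem leaves_pos : ∀ t : BTree, 1 ≤ t.leaves
  | leaf => le_refl 1
  | node l r => le_trans (leaves_pos l) (Nat.le_add_right _ _)

theorem sackinAux_eq : ∀ (t : BTree) (d : ℕ), sackinAux t d = sackin t + d * leaves t
  | leaf, d => by simp [sackinAux, sackin, leaves]
  | node l r, d => by
    simp only [sackinAux, sackin, leaves, sackinAux_eq l (d+1), sackinAux_eq r (d+1),
      sackinAux_eq l 1, sackinAux_eq r 1]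
    ring

theorem sackin_node (l r : BTree) :
    sackin (node l r) = sackin l + sackin r + leaves l + leaves r := by
  simp only [sackin, sackinAux, sackinAux_eq l 1, sackinAux_eq r 1]
  ring

theorem leaves_eq_one {t : BTree} (h : t.leaves = 1) : t = leaf := by
  cases t with
  | leaf => rfl
  | node l r =>
    have := leaves_pos l; have := leaves_pos r
    simp [leaves] at h; omega

theorem leaves_eq_two {t : BTree} (h : t.leaves = 2) : t = node leaf leaf := by
  cases t with
  | leaf => simp [leaves] at h
  | node l r =>
    have hl := leaves_pos l; have hr := leaves_pos r
    simp only [leaves] at h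
    have : l.leaves = 1 := by omega
    have : r.leaves = 1 := by omega
    rw [leaves_eq_one ‹l.leaves = 1›, leaves_eq_one ‹r.leaves = 1›]

/-- Minimal depth of a leaf. -/
def minDepth : BTree → ℕ
  | leaf => 0
  | node l r => min l.minDepth r.minDepth + 1

theorem minDepth_le_height : ∀ t : BTree, minDepth t ≤ height t
  | leaf => le_refl 0
  | node l r => by
    have := minDepth_le_height l; have := minDepth_le_height r
    simp only [minDepth, height]; omega

theorem leaves_le_pow_height : ∀ t : BTree, leaves t ≤ 2 ^ height t
  | leaf => le_refl 1
  | node l r => by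
    have hl := leaves_le_pow_height l; have hr := leaves_le_pow_height r
    have h1 : 2 ^ height l ≤ 2 ^ (max l.height r.height) :=
      Nat.pow_le_pow_right (by norm_num) (le_max_left _ _)
    have h2 : 2 ^ height r ≤ 2 ^ (max l.height r.height) :=
      Nat.pow_le_pow_right (by norm_num) (le_max_right _ _)
    simp only [leaves, height, pow_succ]; omega

theorem pow_minDepth_le_leaves : ∀ t : BTree, 2 ^ minDepth t ≤ leaves t
  | leaf => le_refl 1
  | node l r => by
    have hl := pow_minDepth_le_leaves l; have hr := pow_minDepth_le_leaves r
    have h1 : 2 ^ (min l.minDepth r.minDepth) ≤ 2 ^ minDepth l :=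
      Nat.pow_le_pow_right (by norm_num) (min_le_left _ _)
    have h2 : 2 ^ (min l.minDepth r.minDepth) ≤ 2 ^ minDepth r :=
      Nat.pow_le_pow_right (by norm_num) (min_le_right _ _)
    simp only [leaves, minDepth, pow_succ]; omega

theorem height_eq_zero {t : BTree} (h : height t = 0) : t = leaf := by
  cases t with
  | leaf => rfl
  | node l r => simp [height] at h

/-! ### Iso basics -/

theorem Iso.refl : ∀ t : BTree, Iso t t
  | BTree.leaf => Iso.leaf
  | BTree.node l r => Iso.node (Iso.refl l) (Iso.refl r)

theorem Iso.symm : ∀ {t₁ t₂ : BTree}, Iso t₁ t₂ → Iso t₂ t₁ := by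
  intro t₁ t₂ h
  induction h with
  | leaf => exact Iso.leaf
  | node _ _ ih1 ih2 => exact Iso.node ih1 ih2
  | swap _ _ ih1 ih2 => exact Iso.swap ih2 ih1

theorem Iso.trans : ∀ {t₁ t₂ t₃ : BTree}, Iso t₁ t₂ → Iso t₂ t₃ → Iso t₁ t₃ := by
  intro t₁ t₂ t₃ h
  induction h generalizing t₃ with
  | leaf => exact fun h => h
  | @node a b c d _ _ ih1 ih2 =>
    intro h2
    cases h2 with
    | node g1 g2 => exact Iso.node (ih1 g1) (ih2 g2)
    | swap g1 g2 => exact Iso.swap (ih1 g1) (ih2 g2)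
  | @swap a b c d _ _ ih1 ih2 =>
    intro h2
    cases h2 with
    | node g1 g2 => exact Iso.swap (ih1 g2) (ih2 g1)
    | swap g1 g2 => exact Iso.node (ih1 g2) (ih2 g1)

theorem Iso.leaves_eq {t₁ t₂ : BTree} (h : Iso t₁ t₂) : leaves t₁ = leaves t₂ := by
  induction h with
  | leaf => rfl
  | node _ _ ih1 ih2 => simp [leaves, ih1, ih2]
  | swap _ _ ih1 ih2 => simp [leaves, ih1, ih2]; omega

theorem iso_comm (l r : BTree) : Iso (node l r) (node r l) :=
  Iso.swap (Iso.refl l) (Iso.refl r)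

end BTree

namespace BTree

/-! ### Surgery: removing a deepest cherry, growing a shallowest leaf -/

/-- Remove a deepest cherry (replace its parent by a leaf). -/
def shrink : BTree → BTree
  | BTree.leaf => leaf
  | BTree.node BTree.leaf BTree.leaf => leaf
  | BTree.node BTree.leaf (BTree.node a b) => node leaf (shrink (node a b))
  | BTree.node (BTree.node a b) BTree.leaf => node (shrink (node a b)) leaf
  | BTree.node (BTree.node a b) (BTree.node c d) =>
      if (BTree.node c d).height ≤ (BTree.node a b).height
      then node (shrink (node a b)) (node c d)
      else node (node a b) (shrink (node c d))

theorem shrink_leaves : ∀ t : BTree, 1 ≤ height t → leaves (shrink t) + 1 = leaves t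
  | BTree.leaf, h => by simp [height] at h
  | BTree.node BTree.leaf BTree.leaf, _ => by simp [shrink, leaves]
  | BTree.node BTree.leaf (BTree.node a b), _ => by
    have ih := shrink_leaves (node a b) (by simp [height])
    simp only [shrink, leaves] at *
    omega
  | BTree.node (BTree.node a b) BTree.leaf, _ => by
    have ih := shrink_leaves (node a b) (by simp [height])
    simp only [shrink, leaves] at *
    omega
  | BTree.node (BTree.node a b) (BTree.node c d), _ => by
    rw [shrink]
    split
    · have ih := shrink_leaves (node a b) (by simp [height])
      simp only [leaves] at *
      omega
    · have ih := shrink_leaves (node c d) (by simp [height])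
      simp only [leaves] at *
      omega

theorem shrink_sackin : ∀ t : BTree, 1 ≤ height t →
    sackin (shrink t) + height t + 1 = sackin t
  | BTree.leaf, h => by simp [height] at h
  | BTree.node BTree.leaf BTree.leaf, _ => by
    simp [shrink, sackin_node, sackin, sackinAux, leaves, height]
  | BTree.node BTree.leaf (BTree.node a b), _ => by
    have ih := shrink_sackin (node a b) (by simp [height])
    have hl := shrink_leaves (node a b) (by simp [height])
    rw [shrink, sackin_node, sackin_node]
    simp only [height] at *
    omega
  | BTree.node (BTree.node a b) BTree.leaf, _ => by
    have ih := shrink_sackin (node a b) (by simp [height])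
    have hl := shrink_leaves (node a b) (by simp [height])
    rw [shrink, sackin_node, sackin_node]
    simp only [height] at *
    omega
  | BTree.node (BTree.node a b) (BTree.node c d), _ => by
    rw [shrink]
    split
    · have ih := shrink_sackin (node a b) (by simp [height])
      have hl := shrink_leaves (node a b) (by simp [height])
      rename_i hle
      simp only [sackin_node, height] at *
      omega
    · have ih := shrink_sackin (node c d) (by simp [height])
      have hl := shrink_leaves (node c d) (by simp [height])
      rename_i hle
      simp only [sackin_node, height] at *
      omega

theorem shrink_minDepth : ∀ t : BTree, minDepth t + 1 < height t →
    minDepth (shrink t) ≤ minDepth t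
  | BTree.leaf, h => by simp [height, minDepth] at h
  | BTree.node BTree.leaf BTree.leaf, h => by simp [height, minDepth] at h
  | BTree.node BTree.leaf (BTree.node a b), _ => by
    rw [shrink]
    simp only [minDepth]
    omega
  | BTree.node (BTree.node a b) BTree.leaf, _ => by
    rw [shrink]
    simp only [minDepth]
    omega
  | BTree.node (BTree.node a b) (BTree.node c d), h => by
    rw [shrink]
    split
    · rename_i hle
      simp only [minDepth, height] at h hle ⊢
      rcases le_or_gt (min c.minDepth d.minDepth) (min a.minDepth b.minDepth) with hm | hm
      · omega
      · have ih := shrink_minDepth (node a b) (by simp only [minDepth, height]; omega)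
        simp only [minDepth] at ih
        omega
    · rename_i hle
      simp only [minDepth, height] at h hle ⊢
      rcases le_or_gt (min a.minDepth b.minDepth) (min c.minDepth d.minDepth) with hm | hm
      · omega
      · have ih := shrink_minDepth (node c d) (by simp only [minDepth, height]; omega)
        simp only [minDepth] at ih
        omega

/-- Grow a cherry at a shallowest leaf. -/
def grow : BTree → BTree
  | BTree.leaf => node leaf leaf
  | BTree.node l r =>
      if l.minDepth ≤ r.minDepth then node (grow l) r else node l (grow r)

theorem grow_leaves : ∀ t : BTree, leaves (grow t) = leaves t + 1
  | BTree.leaf => by simp [grow, leaves]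
  | BTree.node l r => by
    rw [grow]
    split
    · have := grow_leaves l; simp only [leaves] at *; omega
    · have := grow_leaves r; simp only [leaves] at *; omega

theorem grow_sackin : ∀ t : BTree, sackin (grow t) = sackin t + minDepth t + 2
  | BTree.leaf => by simp [grow, sackin, sackinAux, minDepth]
  | BTree.node l r => by
    rw [grow]
    split
    · rename_i hle
      have ih := grow_sackin l
      have hl := grow_leaves l
      rw [sackin_node, sackin_node]
      simp only [minDepth] at *
      omega
    · rename_i hle
      have ih := grow_sackin r
      have hl := grow_leaves r
      rw [sackin_node, sackin_node]
      simp only [minDepth] at *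
      omega

/-- A tree is `Balish` if all its leaves lie on (at most) two consecutive levels. -/
def Balish (t : BTree) : Prop := t.height ≤ t.minDepth + 1

theorem improvement {t : BTree} (h : minDepth t + 2 ≤ height t) :
    ∃ t', leaves t' = leaves t ∧ sackin t' < sackin t := by
  have h1 : 1 ≤ height t := by omega
  refine ⟨grow (shrink t), ?_, ?_⟩
  · rw [grow_leaves, ← shrink_leaves t h1]
  · have h2 := shrink_sackin t h1
    have h3 := shrink_minDepth t (by omega)
    rw [grow_sackin]
    omega

theorem balish_of_min {t : BTree}
    (hmin : ∀ t' : BTree, t'.leaves = t.leaves → t.sackin ≤ t'.sackin) : Balish t := by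
  by_contra hb
  unfold Balish at hb
  obtain ⟨t', h1, h2⟩ := improvement (t := t) (by omega)
  exact absurd (hmin t' h1) (by omega)

end BTree

namespace BTree

/-! ### Spec of Balish trees -/

theorem balish_node_left {l r : BTree} (hb : Balish (node l r)) : Balish l := by
  unfold Balish at *
  simp only [height, minDepth] at hb
  have := minDepth_le_height l
  have := minDepth_le_height r
  omega

theorem balish_node_right {l r : BTree} (hb : Balish (node l r)) : Balish r := by
  unfold Balish at *
  simp only [height, minDepth] at hb
  have := minDepth_le_height l
  have := minDepth_le_height r
  omega

theorem sackin_node_comm (l r : BTree) : sackin (node l r) = sackin (node r l) := by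
  rw [sackin_node, sackin_node]; omega

theorem leaves_node_comm (l r : BTree) : leaves (node l r) = leaves (node r l) := by
  simp only [leaves]; omega

theorem height_node_comm (l r : BTree) : height (node l r) = height (node r l) := by
  simp only [height]; omega

theorem balish_node_comm {l r : BTree} (hb : Balish (node l r)) : Balish (node r l) := by
  unfold Balish at *
  simp only [height, minDepth] at *
  omega

theorem perfect_of_balish_skew {l r : BTree} (hb : Balish (node l r))
    (hskew : r.height + 1 = l.height) : leaves r = 2 ^ r.height := by
  have h1 : minDepth r = r.height := by
    unfold Balish at hb
    simp only [height, minDepth] at hb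
    have := minDepth_le_height r
    omega
  have h2 := pow_minDepth_le_leaves r
  rw [h1] at h2
  exact le_antisymm (leaves_le_pow_height r) h2

theorem balish_spec_aux {l r : BTree} (hge : r.height ≤ l.height)
    (hb : Balish (node l r))
    (Sl : leaves l ≤ 2 ^ l.height ∧ 2 ^ l.height < 2 * leaves l ∧
      sackin l + 2 ^ l.height = leaves l * (l.height + 1))
    (Sr : leaves r ≤ 2 ^ r.height ∧ 2 ^ r.height < 2 * leaves r ∧
      sackin r + 2 ^ r.height = leaves r * (r.height + 1)) :
    leaves (node l r) ≤ 2 ^ height (node l r) ∧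
      2 ^ height (node l r) < 2 * leaves (node l r) ∧
      sackin (node l r) + 2 ^ height (node l r) =
        leaves (node l r) * (height (node l r) + 1) := by
  obtain ⟨u1l, u2l, u3l⟩ := Sl
  obtain ⟨u1r, u2r, u3r⟩ := Sr
  have hcase : r.height = l.height ∨ r.height + 1 = l.height := by
    have hb' := hb
    unfold Balish at hb'
    simp only [height, minDepth] at hb'
    have := minDepth_le_height l
    have := minDepth_le_height r
    omega
  have hmax : max l.height r.height = l.height := max_eq_left hge
  rcases hcase with he | he
  · constructor
    · simp only [leaves, height, hmax, pow_succ]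
      rw [he] at u1r
      omega
    constructor
    · simp only [leaves, height, hmax, pow_succ]
      rw [he] at u2r
      omega
    · rw [sackin_node]
      simp only [leaves, height, hmax]
      rw [← he] at u3l
      rw [← he]
      ring_nf
      ring_nf at u3l u3r
      linarith
  · have hperf : leaves r = 2 ^ r.height := perfect_of_balish_skew hb he
    have hps : (2:ℕ) ^ l.height = 2 * 2 ^ r.height := by rw [← he, pow_succ]; ring
    constructor
    · simp only [leaves, height, hmax, pow_succ]
      omega
    constructor
    · simp only [leaves, height, hmax, pow_succ]
      omega
    · rw [sackin_node]
      simp only [leaves, height, hmax]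
      rw [← he] at u3l ⊢
      rw [hperf] at u3r ⊢
      ring_nf
      ring_nf at u3l u3r
      linarith

theorem balish_spec : ∀ t : BTree, Balish t →
    leaves t ≤ 2 ^ height t ∧ 2 ^ height t < 2 * leaves t ∧
      sackin t + 2 ^ height t = leaves t * (height t + 1)
  | BTree.leaf, _ => by
    refine ⟨le_refl 1, by simp [height, leaves], ?_⟩
    simp [sackin, sackinAux, leaves, height]
  | BTree.node l r, hb => by
    have Sl := balish_spec l (balish_node_left hb)
    have Sr := balish_spec r (balish_node_right hb)
    rcases le_total r.height l.height with hge | hge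
    · exact balish_spec_aux hge hb Sl Sr
    · have := balish_spec_aux hge (balish_node_comm hb) Sr Sl
      rw [sackin_node_comm, leaves_node_comm, height_node_comm]
      exact this

theorem balish_height_le {t₁ t₂ : BTree} (b₁ : Balish t₁) (b₂ : Balish t₂)
    (h : leaves t₁ = leaves t₂) : height t₁ ≤ height t₂ := by
  obtain ⟨u1, u2, -⟩ := balish_spec t₁ b₁
  obtain ⟨v1, v2, -⟩ := balish_spec t₂ b₂
  by_contra hlt
  have h2 : 2 ^ (height t₂ + 1) ≤ 2 ^ height t₁ :=
    Nat.pow_le_pow_right (by norm_num) (by omega)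
  rw [pow_succ] at h2
  omega

theorem balish_height_eq {t₁ t₂ : BTree} (b₁ : Balish t₁) (b₂ : Balish t₂)
    (h : leaves t₁ = leaves t₂) : height t₁ = height t₂ :=
  le_antisymm (balish_height_le b₁ b₂ h) (balish_height_le b₂ b₁ h.symm)

theorem balish_sackin_eq {t₁ t₂ : BTree} (b₁ : Balish t₁) (b₂ : Balish t₂)
    (h : leaves t₁ = leaves t₂) : sackin t₁ = sackin t₂ := by
  obtain ⟨-, -, u3⟩ := balish_spec t₁ b₁
  obtain ⟨-, -, v3⟩ := balish_spec t₂ b₂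
  have hh := balish_height_eq b₁ b₂ h
  rw [hh, h] at u3
  omega

/-! ### Existence of minimal trees -/

theorem leaves_caterpillar : ∀ n : ℕ, leaves (caterpillar (n + 1)) = n + 1
  | 0 => rfl
  | n + 1 => by
    show leaves (node (caterpillar (n + 1)) leaf) = n + 2
    simp only [leaves, leaves_caterpillar n]

theorem exists_min (n : ℕ) (hn : 1 ≤ n) :
    ∃ t : BTree, t.leaves = n ∧ ∀ t' : BTree, t'.leaves = n → t.sackin ≤ t'.sackin := by
  classical
  have hex : ∃ s : ℕ, ∃ t : BTree, t.leaves = n ∧ t.sackin = s :=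
    ⟨(caterpillar n).sackin, caterpillar n, by
      obtain ⟨k, rfl⟩ : ∃ k, n = k + 1 := ⟨n - 1, by omega⟩
      exact leaves_caterpillar k, rfl⟩
  obtain ⟨t, ht, hts⟩ := Nat.find_spec hex
  refine ⟨t, ht, fun t' ht' => ?_⟩
  rw [hts]
  exact Nat.find_le ⟨t', ht', rfl⟩

theorem balish_isMin {t : BTree} (hb : Balish t) :
    ∀ t' : BTree, t'.leaves = t.leaves → t.sackin ≤ t'.sackin := by
  obtain ⟨t₀, h₀, hmin⟩ := exists_min (leaves t) (leaves_pos t)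
  have hb₀ : Balish t₀ := balish_of_min (fun t' h => hmin t' (by rw [h, h₀]))
  intro t' ht'
  have : sackin t = sackin t₀ := balish_sackin_eq hb hb₀ (by rw [h₀])
  rw [this]
  exact hmin t' ht'

end BTree

namespace BTree

/-! ### Uniqueness for n near a power of two -/

theorem perfect_iso : ∀ t : BTree, leaves t = 2 ^ height t → Iso t (balanced (height t))
  | BTree.leaf, _ => Iso.leaf
  | BTree.node l r, h => by
    have ul := leaves_le_pow_height l
    have ur := leaves_le_pow_height r
    have pl : (2:ℕ) ^ l.height ≤ 2 ^ max l.height r.height :=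
      Nat.pow_le_pow_right (by norm_num) (le_max_left _ _)
    have pr : (2:ℕ) ^ r.height ≤ 2 ^ max l.height r.height :=
      Nat.pow_le_pow_right (by norm_num) (le_max_right _ _)
    simp only [leaves, height, pow_succ] at h
    have el : leaves l = 2 ^ l.height := by omega
    have er : leaves r = 2 ^ r.height := by omega
    have e23 : (2:ℕ) ^ l.height = 2 ^ r.height := by omega
    have hlr : l.height = r.height := Nat.pow_right_injective (le_refl 2) e23
    have il := perfect_iso l el
    have ir := perfect_iso r er
    have hh : height (node l r) = l.height + 1 := by simp only [height]; omega
    rw [hh]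
    show Iso (node l r) (node (balanced l.height) (balanced l.height))
    exact Iso.node il (by rw [hlr]; exact ir)

theorem balish_height_of_bounds {t : BTree} (hb : Balish t) {k : ℕ}
    (h1 : 2 ^ k < leaves t) (h2 : leaves t ≤ 2 ^ (k + 1)) : height t = k + 1 := by
  obtain ⟨u1, u2, -⟩ := balish_spec t hb
  rcases Nat.lt_trichotomy (height t) (k + 1) with h | h | h
  · have : 2 ^ height t ≤ 2 ^ k := Nat.pow_le_pow_right (by norm_num) (by omega)
    omega
  · exact h
  · have h3 : 2 ^ (k + 2) ≤ 2 ^ height t := Nat.pow_le_pow_right (by norm_num) (by omega)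
    have h4 : (2:ℕ) ^ (k + 2) = 2 * 2 ^ (k + 1) := by ring
    omega

/-- Canonical minimal tree with `2^m + 1` leaves. -/
def upTree : ℕ → BTree
  | 0 => node leaf leaf
  | m + 1 => node (upTree m) (balanced m)

theorem up1_aux (m : ℕ)
    (ih : ∀ t : BTree, Balish t → leaves t = 2 ^ m + 1 → Iso t (upTree m))
    {l r : BTree} (hge : r.height ≤ l.height) (hb : Balish (node l r))
    (hlv : leaves l + leaves r = 2 ^ (m + 1) + 1) :
    Iso l (upTree m) ∧ Iso r (balanced m) := by
  have hP : 1 ≤ 2 ^ m := Nat.one_le_two_pow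
  have e1 : (2:ℕ) ^ (m + 1) = 2 * 2 ^ m := by ring
  have e2 : (2:ℕ) ^ (m + 2) = 4 * 2 ^ m := by ring
  have hn : leaves (node l r) = 2 ^ (m + 1) + 1 := by simp only [leaves]; omega
  have hH : height (node l r) = m + 2 :=
    balish_height_of_bounds hb (k := m + 1) (by omega) (by omega)
  have hmax : max l.height r.height = m + 1 := by
    simp only [height] at hH; omega
  have hl : l.height = m + 1 := by omega
  have hmd : m ≤ min l.minDepth r.minDepth := by
    have hb' := hb
    unfold Balish at hb'
    rw [hH] at hb'
    simp only [minDepth] at hb'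
    omega
  have bl := balish_node_left hb
  have br := balish_node_right hb
  obtain ⟨u1l, u2l, -⟩ := balish_spec l bl
  obtain ⟨u1r, u2r, -⟩ := balish_spec r br
  have hhr : r.height = m := by
    rcases Nat.lt_or_ge r.height (m + 1) with h | h
    · have := minDepth_le_height r
      omega
    · -- r.height = m + 1 : contradiction
      have hrh : r.height = m + 1 := by omega
      rw [hl] at u2l
      rw [hrh] at u2r
      omega
  have hmr : r.minDepth = m := by
    have := minDepth_le_height r
    omega
  have hnr : leaves r = 2 ^ m := by
    have h1 := pow_minDepth_le_leaves r
    have h2 := leaves_le_pow_height r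
    rw [hmr] at h1
    rw [hhr] at h2
    omega
  have hnl : leaves l = 2 ^ m + 1 := by omega
  refine ⟨ih l bl hnl, ?_⟩
  have := perfect_iso r (by rw [hnr, hhr])
  rwa [hhr] at this

theorem up1_iso : ∀ (m : ℕ) (t : BTree), Balish t → leaves t = 2 ^ m + 1 → Iso t (upTree m)
  | 0, t, _, hlv => by
    have h2 : t.leaves = 2 := by simpa using hlv
    rw [leaves_eq_two h2]
    exact Iso.refl _
  | m + 1, t, hb, hlv => by
    cases t with
    | leaf =>
      have hP : 1 ≤ 2 ^ (m + 1) := Nat.one_le_two_pow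
      simp only [leaves] at hlv
      omega
    | node l r =>
      have hlv' : leaves l + leaves r = 2 ^ (m + 1) + 1 := by
        simpa [leaves] using hlv
      rcases le_total r.height l.height with hge | hge
      · obtain ⟨il, ir⟩ := up1_aux m (up1_iso m) hge hb hlv'
        exact Iso.node il ir
      · obtain ⟨il, ir⟩ := up1_aux m (up1_iso m) hge (balish_node_comm hb) (by omega)
        exact Iso.swap ir il

/-- Canonical minimal tree with `2^m - 1` leaves. -/
def downTree : ℕ → BTree
  | 0 => leaf
  | 1 => leaf
  | m + 2 => node (downTree (m + 1)) (balanced (m + 1))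

theorem down1_aux (m : ℕ)
    (ih : ∀ t : BTree, Balish t → leaves t = 2 ^ (m + 1) - 1 → Iso t (downTree (m + 1)))
    {l r : BTree} (hge : r.height ≤ l.height) (hb : Balish (node l r))
    (hlv : leaves l + leaves r = 2 ^ (m + 2) - 1) :
    Iso (node l r) (downTree (m + 2)) := by
  have hP : 1 ≤ 2 ^ m := Nat.one_le_two_pow
  have e1 : (2:ℕ) ^ (m + 1) = 2 * 2 ^ m := by ring
  have e2 : (2:ℕ) ^ (m + 2) = 4 * 2 ^ m := by ring
  have hn : leaves (node l r) = 2 ^ (m + 2) - 1 := by simp only [leaves]; omega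
  have hH : height (node l r) = m + 2 :=
    balish_height_of_bounds hb (k := m + 1) (by omega) (by omega)
  have hmax : max l.height r.height = m + 1 := by
    simp only [height] at hH; omega
  have hl : l.height = m + 1 := by omega
  have hmd : m ≤ min l.minDepth r.minDepth := by
    have hb' := hb
    unfold Balish at hb'
    rw [hH] at hb'
    simp only [minDepth] at hb'
    omega
  have bl := balish_node_left hb
  have br := balish_node_right hb
  obtain ⟨u1l, u2l, -⟩ := balish_spec l bl
  obtain ⟨u1r, u2r, -⟩ := balish_spec r br
  rw [hl] at u1l u2l
  rcases Nat.lt_or_ge r.height (m + 1) with hcase | hcase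
  · -- r has height m, hence is perfect with 2^m leaves; forces m = 0
    have hhr : r.height = m := by
      have := minDepth_le_height r
      omega
    have hmr : r.minDepth = m := by
      have := minDepth_le_height r
      omega
    have hnr : leaves r = 2 ^ m := by
      have h1 := pow_minDepth_le_leaves r
      have h2 := leaves_le_pow_height r
      rw [hmr] at h1
      rw [hhr] at h2
      omega
    have hm0 : m = 0 := by
      by_contra hm
      have : 2 ≤ 2 ^ m := by
        have : 2 ^ 1 ≤ 2 ^ m := Nat.pow_le_pow_right (by norm_num) (by omega)
        simpa using this
      omega
    subst hm0
    have hrl : r = leaf := leaves_eq_one (by omega)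
    have hll : l = node leaf leaf := leaves_eq_two (by omega)
    rw [hrl, hll]
    show Iso (node (node leaf leaf) leaf) (node (downTree 1) (balanced 1))
    exact Iso.swap (Iso.node Iso.leaf Iso.leaf) Iso.leaf
  · have hhr : r.height = m + 1 := by omega
    rw [hhr] at u1r u2r
    have hsplit : leaves l = 2 ^ (m + 1) - 1 ∨ leaves l = 2 ^ (m + 1) := by omega
    rcases hsplit with hnl | hnl
    · have hnr : leaves r = 2 ^ (m + 1) := by omega
      have il := ih l bl hnl
      have ir : Iso r (balanced (m + 1)) := by
        have := perfect_iso r (by rw [hnr, hhr])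
        rwa [hhr] at this
      exact Iso.node il ir
    · have hnr : leaves r = 2 ^ (m + 1) - 1 := by omega
      have ir := ih r br hnr
      have il : Iso l (balanced (m + 1)) := by
        have := perfect_iso l (by rw [hnl, hl])
        rwa [hl] at this
      exact Iso.swap il ir

theorem down1_iso : ∀ (m : ℕ) (t : BTree),
    Balish t → leaves t = 2 ^ (m + 1) - 1 → Iso t (downTree (m + 1))
  | 0, t, _, hlv => by
    have h1 : t.leaves = 1 := by simpa using hlv
    rw [leaves_eq_one h1]
    exact Iso.leaf
  | m + 1, t, hb, hlv => by
    cases t with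
    | leaf =>
      have hP : 1 ≤ 2 ^ m := Nat.one_le_two_pow
      have e2 : (2:ℕ) ^ (m + 2) = 4 * 2 ^ m := by ring
      simp only [leaves] at hlv
      omega
    | node l r =>
      have hlv' : leaves l + leaves r = 2 ^ (m + 2) - 1 := by
        simpa [leaves] using hlv
      rcases le_total r.height l.height with hge | hge
      · exact down1_aux m (down1_iso m) hge hb hlv'
      · have h := down1_aux m (down1_iso m) hge (balish_node_comm hb) (by omega)
        exact Iso.trans (iso_comm l r) h

end BTree

namespace BTree

/-! ### Non-uniqueness away from powers of two -/

/-- Number of nodes whose two children both carry exactly two leaves. -/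
def doubles : BTree → ℕ
  | BTree.leaf => 0
  | BTree.node l r =>
      doubles l + doubles r + (if leaves l = 2 ∧ leaves r = 2 then 1 else 0)

theorem Iso.doubles_eq {t₁ t₂ : BTree} (h : Iso t₁ t₂) : doubles t₁ = doubles t₂ := by
  induction h with
  | leaf => rfl
  | node h1 h2 ih1 ih2 =>
    simp only [doubles, ih1, ih2, h1.leaves_eq, h2.leaves_eq]
  | swap h1 h2 ih1 ih2 =>
    simp only [doubles, ih1, ih2, h1.leaves_eq, h2.leaves_eq]
    rename_i a b c d
    have hx : (if leaves d = 2 ∧ leaves c = 2 then (1:ℕ) else 0)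
        = (if leaves c = 2 ∧ leaves d = 2 then (1:ℕ) else 0) := by
      split_ifs <;> omega
    rw [hx]
    omega

theorem doubles_node (l r : BTree) : doubles (node l r)
    = doubles l + doubles r + (if leaves l = 2 ∧ leaves r = 2 then 1 else 0) := rfl

/-- Balanced tree of height `h` with the `c` leftmost leaves expanded into cherries. -/
def pack : ℕ → ℕ → BTree
  | 0, 0 => leaf
  | 0, _ + 1 => node leaf leaf
  | h + 1, c => node (pack h (min c (2 ^ h))) (pack h (c - min c (2 ^ h)))

/-- Balanced tree of height `h` with `c` leaves expanded into cherries, spread evenly. -/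
def spread : ℕ → ℕ → BTree
  | 0, 0 => leaf
  | 0, _ + 1 => node leaf leaf
  | h + 1, c => node (spread h ((c + 1) / 2)) (spread h (c / 2))

theorem pack_leaves : ∀ h c, c ≤ 2 ^ h → leaves (pack h c) = 2 ^ h + c
  | 0, 0, _ => rfl
  | 0, c + 1, hc => by
    have : c = 0 := by simpa using hc
    subst this
    rfl
  | h + 1, c, hc => by
    have e : (2:ℕ) ^ (h + 1) = 2 * 2 ^ h := by ring
    have ih1 := pack_leaves h (min c (2 ^ h)) (min_le_right _ _)
    have ih2 := pack_leaves h (c - min c (2 ^ h)) (by omega)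
    simp only [pack, leaves, ih1, ih2]
    omega

theorem spread_leaves : ∀ h c, c ≤ 2 ^ h → leaves (spread h c) = 2 ^ h + c
  | 0, 0, _ => rfl
  | 0, c + 1, hc => by
    have : c = 0 := by simpa using hc
    subst this
    rfl
  | h + 1, c, hc => by
    have e : (2:ℕ) ^ (h + 1) = 2 * 2 ^ h := by ring
    have ih1 := spread_leaves h ((c + 1) / 2) (by omega)
    have ih2 := spread_leaves h (c / 2) (by omega)
    simp only [spread, leaves, ih1, ih2]
    omega

theorem pack_shape : ∀ h c, c ≤ 2 ^ h →
    height (pack h c) = h + (if c = 0 then 0 else 1) ∧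
      minDepth (pack h c) = h + (if c = 2 ^ h then 1 else 0)
  | 0, 0, _ => by constructor <;> rfl
  | 0, c + 1, hc => by
    have : c = 0 := by simpa using hc
    subst this
    constructor <;> rfl
  | h + 1, c, hc => by
    have e : (2:ℕ) ^ (h + 1) = 2 * 2 ^ h := by ring
    have hP : 1 ≤ (2:ℕ) ^ h := Nat.one_le_two_pow
    obtain ⟨ih1h, ih1m⟩ := pack_shape h (min c (2 ^ h)) (min_le_right _ _)
    obtain ⟨ih2h, ih2m⟩ := pack_shape h (c - min c (2 ^ h)) (by omega)
    constructor
    · simp only [pack, height, ih1h, ih2h]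
      split_ifs <;> omega
    · simp only [pack, minDepth, ih1m, ih2m]
      split_ifs <;> omega

theorem spread_shape : ∀ h c, c ≤ 2 ^ h →
    height (spread h c) = h + (if c = 0 then 0 else 1) ∧
      minDepth (spread h c) = h + (if c = 2 ^ h then 1 else 0)
  | 0, 0, _ => by constructor <;> rfl
  | 0, c + 1, hc => by
    have : c = 0 := by simpa using hc
    subst this
    constructor <;> rfl
  | h + 1, c, hc => by
    have e : (2:ℕ) ^ (h + 1) = 2 * 2 ^ h := by ring
    have hP : 1 ≤ (2:ℕ) ^ h := Nat.one_le_two_pow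
    obtain ⟨ih1h, ih1m⟩ := spread_shape h ((c + 1) / 2) (by omega)
    obtain ⟨ih2h, ih2m⟩ := spread_shape h (c / 2) (by omega)
    constructor
    · simp only [spread, height, ih1h, ih2h]
      split_ifs <;> omega
    · simp only [spread, minDepth, ih1m, ih2m]
      split_ifs <;> omega

theorem pack_balish {h c : ℕ} (h1 : 1 ≤ c) (h2 : c ≤ 2 ^ h - 1) : Balish (pack h c) := by
  have hP : 1 ≤ (2:ℕ) ^ h := Nat.one_le_two_pow
  obtain ⟨e1, e2⟩ := pack_shape h c (by omega)
  unfold Balish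
  rw [e1, e2]
  split_ifs <;> omega

theorem spread_balish {h c : ℕ} (h1 : 1 ≤ c) (h2 : c ≤ 2 ^ h - 1) : Balish (spread h c) := by
  have hP : 1 ≤ (2:ℕ) ^ h := Nat.one_le_two_pow
  obtain ⟨e1, e2⟩ := spread_shape h c (by omega)
  unfold Balish
  rw [e1, e2]
  split_ifs <;> omega

theorem pack_doubles : ∀ h c, c ≤ 2 ^ (h + 2) →
    doubles (pack (h + 2) c) + (c + 3) / 4 = c / 2 + 2 ^ h
  | 0, 0, _ => by decide
  | 0, 1, _ => by decide
  | 0, 2, _ => by decide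
  | 0, 3, _ => by decide
  | 0, 4, _ => by decide
  | 0, c + 5, hc => by norm_num at hc; omega
  | h + 1, c, hc => by
    have e : (2:ℕ) ^ (h + 1 + 2) = 2 * 2 ^ (h + 2) := by ring
    have e2 : (2:ℕ) ^ (h + 2) = 4 * 2 ^ h := by ring
    have e3 : (2:ℕ) ^ (h + 1) = 2 * 2 ^ h := by ring
    have hP : 1 ≤ (2:ℕ) ^ h := Nat.one_le_two_pow
    have ha : min c (2 ^ (h + 2)) ≤ 2 ^ (h + 2) := min_le_right _ _
    have hb : c - min c (2 ^ (h + 2)) ≤ 2 ^ (h + 2) := by omega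
    have ih1 := pack_doubles h (min c (2 ^ (h + 2))) ha
    have ih2 := pack_doubles h (c - min c (2 ^ (h + 2))) hb
    have hl1 := pack_leaves (h + 2) (min c (2 ^ (h + 2))) ha
    have hl2 := pack_leaves (h + 2) (c - min c (2 ^ (h + 2))) hb
    show doubles (node (pack (h + 2) (min c (2 ^ (h + 2))))
        (pack (h + 2) (c - min c (2 ^ (h + 2))))) + (c + 3) / 4 = c / 2 + 2 ^ (h + 1)
    rw [doubles_node]
    rw [if_neg (by rw [hl1, hl2]; omega)]
    omega

theorem spread_doubles : ∀ h c, c ≤ 2 ^ (h + 2) →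
    doubles (spread (h + 2) c) = (c - 2 ^ (h + 1)) + (2 ^ h - c)
  | 0, 0, _ => by decide
  | 0, 1, _ => by decide
  | 0, 2, _ => by decide
  | 0, 3, _ => by decide
  | 0, 4, _ => by decide
  | 0, c + 5, hc => by norm_num at hc; omega
  | h + 1, c, hc => by
    have e : (2:ℕ) ^ (h + 1 + 2) = 2 * 2 ^ (h + 2) := by ring
    have e2 : (2:ℕ) ^ (h + 2) = 4 * 2 ^ h := by ring
    have e3 : (2:ℕ) ^ (h + 1) = 2 * 2 ^ h := by ring
    have e4 : (2:ℕ) ^ (h + 1 + 1) = 4 * 2 ^ h := by ring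
    have hP : 1 ≤ (2:ℕ) ^ h := Nat.one_le_two_pow
    have ha : (c + 1) / 2 ≤ 2 ^ (h + 2) := by omega
    have hb : c / 2 ≤ 2 ^ (h + 2) := by omega
    have ih1 := spread_doubles h ((c + 1) / 2) ha
    have ih2 := spread_doubles h (c / 2) hb
    have hl1 := spread_leaves (h + 2) ((c + 1) / 2) ha
    have hl2 := spread_leaves (h + 2) (c / 2) hb
    show doubles (node (spread (h + 2) ((c + 1) / 2)) (spread (h + 2) (c / 2)))
        = (c - 2 ^ (h + 1 + 1)) + (2 ^ (h + 1) - c)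
    rw [doubles_node]
    rw [if_neg (by rw [hl1, hl2]; omega)]
    omega

theorem pack_spread_not_iso {h c : ℕ} (h1 : 2 ≤ c) (h2 : c ≤ 2 ^ (h + 2) - 2) :
    ¬ Iso (pack (h + 2) c) (spread (h + 2) c) := by
  intro hiso
  have hd := hiso.doubles_eq
  have e2 : (2:ℕ) ^ (h + 2) = 4 * 2 ^ h := by ring
  have e3 : (2:ℕ) ^ (h + 1) = 2 * 2 ^ h := by ring
  have hP : 1 ≤ (2:ℕ) ^ h := Nat.one_le_two_pow
  have d1 := pack_doubles h c (by omega)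
  have d2 := spread_doubles h c (by omega)
  omega

end BTree

/-- there is a unique (up to isomorphism) rooted binary tree with
`n` leaves of minimal Sackin index iff `n ∈ {2^m − 1, 2^m, 2^m + 1}` for some `m`. -/
theorem stmt17 (n : ℕ) (hn : 1 ≤ n) :
    ((∃ t : BTree, t.leaves = n ∧ ∀ t' : BTree, t'.leaves = n → t.sackin ≤ t'.sackin) ∧
     (∀ t₁ t₂ : BTree, t₁.leaves = n → t₂.leaves = n →
        (∀ t' : BTree, t'.leaves = n → t₁.sackin ≤ t'.sackin) →
        (∀ t' : BTree, t'.leaves = n → t₂.sackin ≤ t'.sackin) →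
        Iso t₁ t₂))
    ↔ ∃ m : ℕ, n = 2 ^ m - 1 ∨ n = 2 ^ m ∨ n = 2 ^ m + 1 := by
  constructor
  · rintro ⟨-, huniq⟩
    by_contra hno
    push_neg at hno
    have hn1 : n ≠ 1 := by
      have := (hno 0).2.1
      simpa using this
    have h1 : 2 ^ Nat.log 2 n ≤ n := Nat.pow_log_le_self 2 (by omega)
    have h2 : n < 2 ^ (Nat.log 2 n + 1) := Nat.lt_pow_succ_log_self (by norm_num) n
    have h3 : 2 ^ Nat.log 2 n < n :=
      lt_of_le_of_ne h1 (fun h => (hno (Nat.log 2 n)).2.1 h.symm)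
    have h4 := (hno (Nat.log 2 n)).2.2
    have h5 := (hno (Nat.log 2 n + 1)).1
    have e1 : (2:ℕ) ^ (Nat.log 2 n + 1) = 2 * 2 ^ Nat.log 2 n := by ring
    have hlow : 2 ^ Nat.log 2 n + 2 ≤ n := by omega
    have hhigh : n ≤ 2 ^ (Nat.log 2 n + 1) - 2 := by omega
    have h6 : 4 ≤ 2 ^ Nat.log 2 n := by omega
    have hL2 : 2 ≤ Nat.log 2 n := by
      by_contra hcon
      have : (2:ℕ) ^ Nat.log 2 n ≤ 2 ^ 1 := Nat.pow_le_pow_right (by norm_num) (by omega)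
      norm_num at this
      omega
    obtain ⟨h', hLe⟩ : ∃ h', Nat.log 2 n = h' + 2 := ⟨Nat.log 2 n - 2, by omega⟩
    rw [hLe] at h1 h3 h4 h5 e1 hlow hhigh h6
    set c := n - 2 ^ (h' + 2) with hc
    have hc1 : 2 ≤ c := by omega
    have hc2 : c ≤ 2 ^ (h' + 2) - 2 := by omega
    have hP : 1 ≤ (2:ℕ) ^ (h' + 2) := Nat.one_le_two_pow
    have hb1 : Balish (pack (h' + 2) c) := pack_balish (by omega) (by omega)
    have hb2 : Balish (spread (h' + 2) c) := spread_balish (by omega) (by omega)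
    have hl1 : leaves (pack (h' + 2) c) = n := by
      rw [pack_leaves _ _ (by omega)]
      omega
    have hl2 : leaves (spread (h' + 2) c) = n := by
      rw [spread_leaves _ _ (by omega)]
      omega
    have hmin1 := balish_isMin hb1
    have hmin2 := balish_isMin hb2
    have hiso := huniq _ _ hl1 hl2
      (fun t' ht' => hmin1 t' (by rw [ht', hl1]))
      (fun t' ht' => hmin2 t' (by rw [ht', hl2]))
    exact pack_spread_not_iso hc1 hc2 hiso
  · rintro ⟨m, hm⟩
    refine ⟨exists_min n hn, ?_⟩
    intro t₁ t₂ h₁ h₂ hm₁ hm₂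
    have b₁ : Balish t₁ := balish_of_min (fun t' h => hm₁ t' (by rw [h, h₁]))
    have b₂ : Balish t₂ := balish_of_min (fun t' h => hm₂ t' (by rw [h, h₂]))
    rcases hm with h | h | h
    · -- n = 2 ^ m - 1
      rcases Nat.eq_zero_or_pos m with rfl | hm0
      · norm_num at h
        omega
      · obtain ⟨m', rfl⟩ : ∃ m', m = m' + 1 := ⟨m - 1, by omega⟩
        have i₁ := down1_iso m' t₁ b₁ (by rw [h₁, h])
        have i₂ := down1_iso m' t₂ b₂ (by rw [h₂, h])
        exact i₁.trans i₂.symm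
    · -- n = 2 ^ m
      rcases Nat.eq_zero_or_pos m with rfl | hm0
      · have e₁ : t₁ = leaf := leaves_eq_one (by rw [h₁, h]; norm_num)
        have e₂ : t₂ = leaf := leaves_eq_one (by rw [h₂, h]; norm_num)
        rw [e₁, e₂]
        exact Iso.leaf
      · obtain ⟨m', rfl⟩ : ∃ m', m = m' + 1 := ⟨m - 1, by omega⟩
        have hP : 1 ≤ (2:ℕ) ^ m' := Nat.one_le_two_pow
        have e1 : (2:ℕ) ^ (m' + 1) = 2 * 2 ^ m' := by ring
        have hh₁ : height t₁ = m' + 1 :=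
          balish_height_of_bounds b₁ (by rw [h₁, h]; omega) (by rw [h₁, h])
        have hh₂ : height t₂ = m' + 1 :=
          balish_height_of_bounds b₂ (by rw [h₂, h]; omega) (by rw [h₂, h])
        have i₁ : Iso t₁ (balanced (m' + 1)) := by
          have := perfect_iso t₁ (by rw [h₁, h, hh₁])
          rwa [hh₁] at this
        have i₂ : Iso t₂ (balanced (m' + 1)) := by
          have := perfect_iso t₂ (by rw [h₂, h, hh₂])
          rwa [hh₂] at this
        exact i₁.trans i₂.symm
    · -- n = 2 ^ m + 1
      have i₁ := up1_iso m t₁ b₁ (by rw [h₁, h])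
      have i₂ := up1_iso m t₂ b₂ (by rw [h₂, h])
      exact i₁.trans i₂.symm
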